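/- Spectral norm bound via regular vectors: for any real $p \times p$ matrix $A$, $\|A\| \leq 12 \lceil \ln(2p) \rceil^2 \max_{x, y \in \text{Reg}_p} |(Ax, y)|$, where $\text{Reg}_p = \bigcup_{s=1}^p \text{Reg}_p(s)$. -/

import Mathlib

open MeasureTheory ProbabilityTheory Matrix

/-- Spectral (operator) norm of a real matrix, via the Euclidean spaces. -/
noncomputable def specNorm {m n : ℕ} (A : Matrix (Fin m) (Fin n) ℝ) : ℝ :=
  ‖LinearMap.toContinuousLinearMap (Matrix.toEuclideanLin A)‖

/-- Frobenius norm of a real matrix. -/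
noncomputable def frobNorm {m n : ℕ} (A : Matrix (Fin m) (Fin n) ℝ) : ℝ :=
  Real.sqrt (A * Aᵀ).trace

/-- Euclidean norm of a vector. -/
noncomputable def vecNorm {p : ℕ} (v : Fin p → ℝ) : ℝ :=
  Real.sqrt (∑ i, v i ^ 2)

/-- A family of random variables is i.i.d. standard Gaussian. -/
def IidStdGaussian {Ω : Type*} [MeasurableSpace Ω] (P : Measure Ω)
    {ι : Type*} (Y : ι → Ω → ℝ) : Prop :=
  (∀ i, Measure.map (Y i) P = gaussianReal 0 1) ∧
    iIndepFun Y P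

/-- The set of regular vectors `Reg_p = ⋃_{s ∈ [p]} Reg_p(s)`: unit vectors all of whose
coordinates satisfy `x_i² ∈ {0, 1/s}` for some `s ∈ {1, …, p}`. -/
def RegVectors (p : ℕ) : Set (Fin p → ℝ) :=
  {x | (∑ i, x i ^ 2) = 1 ∧
    ∃ s : ℕ, 1 ≤ s ∧ s ≤ p ∧ ∀ i, x i ^ 2 = 0 ∨ x i ^ 2 = 1 / s}

section Aux

lemma dot_rep {p : ℕ} (A : Matrix (Fin p) (Fin p) ℝ) (v w : Fin p → ℝ) :
    A.mulVec v ⬝ᵥ w = ∑ i, v i * (∑ j, A j i * w j) := by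
  simp only [dotProduct, mulVec, Finset.sum_mul, Finset.mul_sum]
  rw [Finset.sum_comm]
  exact Finset.sum_congr rfl fun i _ => Finset.sum_congr rfl fun j _ => by ring

lemma dot_rep' {p : ℕ} (A : Matrix (Fin p) (Fin p) ℝ) (v w : Fin p → ℝ) :
    A.mulVec v ⬝ᵥ w = ∑ j, w j * (∑ i, A j i * v i) := by
  simp only [dotProduct, mulVec]
  exact Finset.sum_congr rfl fun j _ => by rw [mul_comm]

lemma key_sign {p : ℕ} (g v : Fin p → ℝ) (S : Finset (Fin p)) (hS : S.Nonempty)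
    (a : ℝ) (hv0 : ∀ i ∉ S, v i = 0) (hva : ∀ i, |v i| ≤ a) :
    ∃ u : Fin p → ℝ, u ∈ RegVectors p ∧
      |∑ i, v i * g i| ≤ a * Real.sqrt S.card * |∑ i, u i * g i| := by
  have hcard : 0 < (S.card : ℝ) := by exact_mod_cast Finset.card_pos.mpr hS
  set s : ℝ := Real.sqrt S.card with hs
  have hs0 : 0 < s := Real.sqrt_pos.mpr hcard
  have hss : s ^ 2 = S.card := Real.sq_sqrt hcard.le
  set u : Fin p → ℝ := fun i => if i ∈ S then (if 0 ≤ g i then 1 else -1) / s else 0 with hu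
  have husq : ∀ i, u i ^ 2 = if i ∈ S then 1 / (S.card:ℝ) else 0 := by
    intro i
    by_cases h : i ∈ S
    · simp only [hu, h, if_true, div_pow, hss]
      split <;> norm_num
    · simp [hu, h]
  have ha0 : 0 ≤ a := le_trans (abs_nonneg _) (hva hS.choose)
  refine ⟨u, ⟨?_, S.card, Finset.card_pos.mpr hS, by simpa using S.card_le_univ, fun i => ?_⟩, ?_⟩
  · rw [Finset.sum_congr rfl fun i _ => husq i, Finset.sum_ite_mem, Finset.univ_inter,
      Finset.sum_const, nsmul_eq_mul]
    field_simp
  · rw [husq i]; split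
    · right; rfl
    · left; rfl
  · have hgu : ∑ i, u i * g i = (∑ i ∈ S, |g i|) / s := by
      rw [← Finset.sum_subset (Finset.subset_univ S) (fun i _ hi => by simp [hu, hi]),
        Finset.sum_div]
      refine Finset.sum_congr rfl fun i hi => ?_
      simp only [hu, hi, if_true]
      rcases le_or_gt 0 (g i) with h | h
      · rw [if_pos h, abs_of_nonneg h]; ring
      · rw [if_neg (not_le.mpr h), abs_of_neg h]; ring
    have habs : |∑ i, u i * g i| = (∑ i ∈ S, |g i|) / s := by
      rw [hgu, abs_of_nonneg]
      positivity
    rw [habs]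
    calc |∑ i, v i * g i| = |∑ i ∈ S, v i * g i| := by
          rw [← Finset.sum_subset (Finset.subset_univ S) (fun i _ hi => by simp [hv0 i hi])]
      _ ≤ ∑ i ∈ S, |v i * g i| := Finset.abs_sum_le_sum_abs _ _
      _ ≤ ∑ i ∈ S, a * |g i| := by
          refine Finset.sum_le_sum fun i _ => ?_
          rw [abs_mul]
          exact mul_le_mul_of_nonneg_right (hva i) (abs_nonneg _)
      _ = a * ∑ i ∈ S, |g i| := by rw [Finset.mul_sum]
      _ = a * s * ((∑ i ∈ S, |g i|) / s) := by field_simp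

lemma core {p : ℕ} (A : Matrix (Fin p) (Fin p) ℝ) (M : ℝ)
    (hM : ∀ u ∈ RegVectors p, ∀ w ∈ RegVectors p, |A.mulVec u ⬝ᵥ w| ≤ M)
    (v w : Fin p → ℝ) (S T : Finset (Fin p)) (hS : S.Nonempty) (hT : T.Nonempty)
    (a b : ℝ) (hv0 : ∀ i ∉ S, v i = 0) (hva : ∀ i, |v i| ≤ a)
    (hw0 : ∀ j ∉ T, w j = 0) (hwb : ∀ j, |w j| ≤ b) :
    |A.mulVec v ⬝ᵥ w| ≤ (a * Real.sqrt S.card) * ((b * Real.sqrt T.card) * M) := by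
  have ha0 : 0 ≤ a * Real.sqrt S.card := by
    have := le_trans (abs_nonneg _) (hva hS.choose); positivity
  have hb0 : 0 ≤ b * Real.sqrt T.card := by
    have := le_trans (abs_nonneg _) (hwb hT.choose); positivity
  obtain ⟨u, hu, hu2⟩ := key_sign (fun i => ∑ j, A j i * w j) v S hS a hv0 hva
  rw [← dot_rep A v w, ← dot_rep A u w] at hu2
  obtain ⟨u', hu', hu2'⟩ := key_sign (fun j => ∑ i, A j i * u i) w T hT b hw0 hwb
  rw [← dot_rep' A u w, ← dot_rep' A u u'] at hu2'
  have hfin : |A.mulVec u ⬝ᵥ u'| ≤ M := hM u hu u' hu'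
  calc |A.mulVec v ⬝ᵥ w| ≤ a * Real.sqrt S.card * |A.mulVec u ⬝ᵥ w| := hu2
    _ ≤ a * Real.sqrt S.card * ((b * Real.sqrt T.card) * M) := by
        refine mul_le_mul_of_nonneg_left ?_ ha0
        calc |A.mulVec u ⬝ᵥ w| ≤ b * Real.sqrt T.card * |A.mulVec u ⬝ᵥ u'| := hu2'
          _ ≤ b * Real.sqrt T.card * M := mul_le_mul_of_nonneg_left hfin hb0

lemma levels {p K : ℕ} (hpK : (4:ℝ) * p ≤ 4 ^ K)
    (x : Fin p → ℝ) (hx : ∑ i, x i ^ 2 = 1) :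
    ∃ (xs : ℕ → Fin p → ℝ) (c : ℕ → ℝ),
      (∀ i, ∑ k ∈ Finset.range (K+1), xs k i = x i) ∧
      (∀ k, 0 ≤ c k) ∧
      (∑ k ∈ Finset.range (K+1), c k ≤ 2 * Real.sqrt K + 1/2) ∧
      (∀ k, xs k = 0 ∨ ∃ S : Finset (Fin p), S.Nonempty ∧ (∀ i ∉ S, xs k i = 0) ∧
        ∃ a : ℝ, (∀ i, |xs k i| ≤ a) ∧ a * Real.sqrt S.card ≤ c k) := by
  classical
  have h12 : ∀ k : ℕ, ((1:ℝ)/2) ^ k = (2:ℝ) ^ (-(k:ℤ)) := by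
    intro k
    rw [_root_.zpow_neg, zpow_natCast, one_div, inv_pow]
  set lv : Fin p → ℕ := fun i =>
    if (2:ℝ) ^ (-(K:ℤ)) ≤ |x i| then (-(Int.log 2 |x i|) - 1).toNat else K with hlv
  have hsq_le : ∀ i, x i ^ 2 ≤ 1 := by
    intro i
    rw [← hx]
    exact Finset.single_le_sum (fun j _ => sq_nonneg (x j)) (Finset.mem_univ i)
  have habs1 : ∀ i, |x i| ≤ 1 := by
    intro i
    calc |x i| = Real.sqrt (x i ^ 2) := (Real.sqrt_sq_eq_abs _).symm
      _ ≤ Real.sqrt 1 := Real.sqrt_le_sqrt (hsq_le i)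
      _ = 1 := Real.sqrt_one
  have hsm := zpow_right_strictMono₀ (one_lt_two : (1:ℝ) < 2)
  have hA : ∀ i, lv i ≤ K := by
    intro i
    rw [hlv]
    dsimp only
    split
    · rename_i h
      have hlt : |x i| < (2:ℝ) ^ (Int.log 2 |x i| + 1) := by
        have := Int.lt_zpow_succ_log_self (by norm_num : 1 < 2) |x i|
        simpa using this
      have : (2:ℝ) ^ (-(K:ℤ)) < (2:ℝ) ^ (Int.log 2 |x i| + 1) := lt_of_le_of_lt h hlt
      have hKm : -(K:ℤ) < Int.log 2 |x i| + 1 := hsm.lt_iff_lt.mp this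
      have : -(Int.log 2 |x i|) - 1 ≤ (K:ℤ) := by omega
      exact Int.toNat_le.mpr this
    · exact le_rfl
  have hB : ∀ i, |x i| ≤ ((1:ℝ)/2) ^ (lv i) := by
    intro i
    rw [hlv]
    dsimp only
    split
    · rename_i h
      set m := Int.log 2 |x i| with hm
      have hlt : |x i| < (2:ℝ) ^ (m + 1) := by
        have := Int.lt_zpow_succ_log_self (by norm_num : 1 < 2) |x i|
        simpa using this
      by_cases h2 : 0 ≤ -m - 1
      · rw [h12, Int.toNat_of_nonneg h2]
        have : -(-m-1) = m + 1 := by ring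
        rw [this]
        exact hlt.le
      · have : (-m - 1).toNat = 0 := by omega
        rw [this]
        simpa using habs1 i
    · rename_i h
      push_neg at h
      rw [h12]
      exact h.le
  have hC : ∀ i, lv i < K → ((1:ℝ)/2) ^ (lv i + 1) ≤ |x i| := by
    intro i hik
    have hthen : (2:ℝ) ^ (-(K:ℤ)) ≤ |x i| := by
      by_contra h
      rw [hlv] at hik
      dsimp only at hik
      rw [if_neg h] at hik
      omega
    rw [hlv]
    dsimp only
    rw [if_pos hthen]
    rw [hlv] at hik
    dsimp only at hik
    rw [if_pos hthen] at hik
    have hpos : 0 < |x i| := lt_of_lt_of_le (by positivity) hthen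
    set m := Int.log 2 |x i| with hm
    have hge : (2:ℝ) ^ m ≤ |x i| := Int.zpow_log_le_self (by norm_num : 1 < 2) hpos
    by_cases h2 : 0 ≤ -m - 1
    · rw [h12]
      have ht : (((-m - 1).toNat : ℤ)) = -m - 1 := Int.toNat_of_nonneg h2
      have he : (-(((-m - 1).toNat + 1 : ℕ) : ℤ)) = m := by push_cast [ht]; ring
      rw [he]
      exact hge
    · have hm0 : 0 ≤ m := by omega
      have h0 : (-m - 1).toNat = 0 := by omega
      rw [h0]
      have : (1:ℝ) ≤ (2:ℝ) ^ m := by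
        have := hsm.le_iff_le.mpr hm0
        simpa using this
      calc ((1:ℝ)/2) ^ (0+1) ≤ 1 := by norm_num
        _ ≤ (2:ℝ) ^ m := this
        _ ≤ |x i| := hge
  set D : ℕ → Finset (Fin p) := fun k => Finset.univ.filter (fun i => lv i = k) with hD
  set q : ℕ → ℝ := fun k => ∑ i ∈ D k, x i ^ 2 with hq
  have hq0 : ∀ k, 0 ≤ q k := fun k => Finset.sum_nonneg fun i _ => sq_nonneg _
  set xs : ℕ → Fin p → ℝ := fun k i => if lv i = k then x i else 0 with hxs
  set c : ℕ → ℝ := fun k => if k < K then 2 * Real.sqrt (q k) else 1/2 with hc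
  have hc0 : ∀ k, 0 ≤ c k := by
    intro k
    rw [hc]
    dsimp only
    split
    · positivity
    · norm_num
  refine ⟨xs, c, ?_, hc0, ?_, ?_⟩
  · intro i
    rw [hxs]
    dsimp only
    rw [Finset.sum_ite_eq (Finset.range (K+1)) (lv i) (fun _ => x i)]
    rw [if_pos (Finset.mem_range.mpr (Nat.lt_succ_of_le (hA i)))]
  · have hfib : ∑ k ∈ Finset.range (K+1), q k = 1 := by
      rw [hq, ← hx]
      dsimp only
      exact Finset.sum_fiberwise_of_maps_to
        (fun i _ => Finset.mem_range.mpr (Nat.lt_succ_of_le (hA i))) (fun i => x i ^ 2)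
    have hqK : ∑ k ∈ Finset.range K, q k ≤ 1 := by
      rw [← hfib]
      refine Finset.sum_le_sum_of_subset_of_nonneg ?_ (fun k _ _ => hq0 k)
      exact Finset.range_subset_range.mpr (Nat.le_succ K)
    have hcs : (∑ k ∈ Finset.range K, Real.sqrt (q k)) ≤ Real.sqrt K := by
      rw [Real.le_sqrt (Finset.sum_nonneg fun k _ => Real.sqrt_nonneg _) (Nat.cast_nonneg K)]
      calc (∑ k ∈ Finset.range K, Real.sqrt (q k)) ^ 2
          ≤ (Finset.range K).card * ∑ k ∈ Finset.range K, Real.sqrt (q k) ^ 2 :=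
            sq_sum_le_card_mul_sum_sq
        _ = K * ∑ k ∈ Finset.range K, q k := by
            rw [Finset.card_range]
            congr 1
            exact Finset.sum_congr rfl fun k _ => Real.sq_sqrt (hq0 k)
        _ ≤ K * 1 := mul_le_mul_of_nonneg_left hqK (Nat.cast_nonneg K)
        _ = K := mul_one _
    rw [Finset.sum_range_succ]
    have hck : ∀ k ∈ Finset.range K, c k = 2 * Real.sqrt (q k) := by
      intro k hk
      rw [hc]
      dsimp only
      rw [if_pos (Finset.mem_range.mp hk)]
    rw [Finset.sum_congr rfl hck]
    have hcK : c K = 1/2 := by rw [hc]; simp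
    rw [hcK, ← Finset.mul_sum]
    have := mul_le_mul_of_nonneg_left hcs (by norm_num : (0:ℝ) ≤ 2)
    linarith
  · intro k
    by_cases hne : (D k).Nonempty
    · right
      refine ⟨D k, hne, ?_, ((1:ℝ)/2)^k, ?_, ?_⟩
      · intro i hi
        rw [hxs]
        dsimp only
        rw [if_neg]
        intro h
        exact hi (by rw [hD]; simp [h])
      · intro i
        rw [hxs]
        dsimp only
        split
        · rename_i h
          rw [← h]
          exact hB i
        · simp only [abs_zero]
          positivity
      · have hkK : k ≤ K := by
          obtain ⟨i, hi⟩ := hne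
          rw [hD] at hi
          simp only [Finset.mem_filter, Finset.mem_univ, true_and] at hi
          rw [← hi]
          exact hA i
        have key : ∀ r : ℝ, 0 ≤ r → (((1:ℝ)/2)^k)^2 * (D k).card ≤ r →
            ((1:ℝ)/2)^k * Real.sqrt ((D k).card) ≤ Real.sqrt r := by
          intro r hr hle
          calc ((1:ℝ)/2)^k * Real.sqrt ((D k).card)
              = Real.sqrt ((((1:ℝ)/2)^k)^2 * (D k).card) := by
                rw [Real.sqrt_mul (by positivity), Real.sqrt_sq (by positivity)]
            _ ≤ Real.sqrt r := Real.sqrt_le_sqrt hle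
        by_cases hkK' : k < K
        · have hper : ∀ i ∈ D k, (((1:ℝ)/2)^k)^2 ≤ 4 * x i ^ 2 := by
            intro i hi
            rw [hD] at hi
            simp only [Finset.mem_filter, Finset.mem_univ, true_and] at hi
            have hlow : ((1:ℝ)/2) ^ (k + 1) ≤ |x i| := by
              rw [← hi]
              exact hC i (hi ▸ hkK')
            have hsq : (((1:ℝ)/2) ^ (k+1))^2 ≤ x i ^ 2 := by
              rw [← sq_abs (x i)]
              exact pow_le_pow_left₀ (by positivity) hlow 2
            calc (((1:ℝ)/2)^k)^2 = 4 * (((1:ℝ)/2) ^ (k+1))^2 := by ring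
              _ ≤ 4 * x i ^ 2 := by linarith
          have hcard : (((1:ℝ)/2)^k)^2 * (D k).card ≤ 4 * q k := by
            rw [hq]
            dsimp only
            rw [Finset.mul_sum, mul_comm]
            calc ((D k).card : ℝ) * (((1:ℝ)/2)^k)^2
                = ∑ _i ∈ D k, (((1:ℝ)/2)^k)^2 := by
                  rw [Finset.sum_const, nsmul_eq_mul]
              _ ≤ ∑ i ∈ D k, 4 * x i ^ 2 := Finset.sum_le_sum hper
          have h4q : Real.sqrt (4 * q k) = 2 * Real.sqrt (q k) := by
            rw [show (4:ℝ) * q k = 2^2 * q k by ring, Real.sqrt_mul (by positivity),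
              Real.sqrt_sq (by norm_num)]
          have := key (4 * q k) (by positivity) hcard
          rw [h4q] at this
          rw [hc]
          dsimp only
          rw [if_pos hkK']
          exact this
        · have hkeq : k = K := le_antisymm hkK (not_lt.mp hkK')
          have hcardp : ((D k).card : ℝ) ≤ p := by
            exact_mod_cast (Finset.card_le_univ (D k)).trans (le_of_eq (Fintype.card_fin p))
          have hcard : (((1:ℝ)/2)^k)^2 * (D k).card ≤ 1/4 := by
            have h1 : (((1:ℝ)/2)^k)^2 = ((4:ℝ)^K)⁻¹ := by
              rw [hkeq, ← pow_mul, mul_comm, pow_mul, ← inv_pow]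
              norm_num
            rw [h1]
            have h4 : (0:ℝ) < 4 ^ K := by positivity
            rw [inv_mul_le_iff₀ h4]
            nlinarith [hcardp, hpK]
          have := key (1/4) (by norm_num) hcard
          rw [show Real.sqrt (1/4) = 1/2 by
            rw [show (1/4:ℝ) = (1/2)^2 by norm_num, Real.sqrt_sq (by norm_num)]] at this
          rw [hc]
          dsimp only
          rw [if_neg hkK']
          exact this
    · left
      funext i
      simp only [hxs, Pi.zero_apply]
      rw [if_neg]
      intro h
      exact hne ⟨i, by rw [hD]; simp [h]⟩

lemma unit_bound {p K : ℕ} (A : Matrix (Fin p) (Fin p) ℝ) (M : ℝ) (hM0 : 0 ≤ M)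
    (hM : ∀ u ∈ RegVectors p, ∀ w ∈ RegVectors p, |A.mulVec u ⬝ᵥ w| ≤ M)
    (hpK : (4:ℝ) * p ≤ 4 ^ K)
    (x y : Fin p → ℝ) (hx : ∑ i, x i ^ 2 = 1) (hy : ∑ i, y i ^ 2 = 1) :
    |A.mulVec x ⬝ᵥ y| ≤ (2 * Real.sqrt K + 1/2)^2 * M := by
  obtain ⟨xs, c, hxdec, hc0, hcsum, hxprop⟩ := levels hpK x hx
  obtain ⟨ys, d, hydec, hd0, hdsum, hyprop⟩ := levels hpK y hy
  have hx1 : A.mulVec x ⬝ᵥ y = ∑ k ∈ Finset.range (K+1), A.mulVec (xs k) ⬝ᵥ y := by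
    rw [dot_rep]
    have h1 : ∀ i : Fin p, x i * (∑ j, A j i * y j)
        = ∑ k ∈ Finset.range (K+1), xs k i * (∑ j, A j i * y j) := by
      intro i; rw [← Finset.sum_mul, hxdec i]
    rw [Finset.sum_congr rfl fun i _ => h1 i, Finset.sum_comm]
    exact Finset.sum_congr rfl fun k _ => (dot_rep A (xs k) y).symm
  have hx2 : ∀ k, A.mulVec (xs k) ⬝ᵥ y
      = ∑ l ∈ Finset.range (K+1), A.mulVec (xs k) ⬝ᵥ (ys l) := by
    intro k
    rw [dot_rep']
    have h1 : ∀ j : Fin p, y j * (∑ i, A j i * xs k i)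
        = ∑ l ∈ Finset.range (K+1), ys l j * (∑ i, A j i * xs k i) := by
      intro j; rw [← Finset.sum_mul, hydec j]
    rw [Finset.sum_congr rfl fun j _ => h1 j, Finset.sum_comm]
    exact Finset.sum_congr rfl fun l _ => (dot_rep' A (xs k) (ys l)).symm
  have hblock : ∀ k l, |A.mulVec (xs k) ⬝ᵥ (ys l)| ≤ c k * (d l * M) := by
    intro k l
    rcases hxprop k with hzero | ⟨S, hS, hS0, a, ha, haS⟩
    · rw [hzero]
      simp only [Matrix.mulVec_zero, zero_dotProduct, abs_zero]
      exact mul_nonneg (hc0 k) (mul_nonneg (hd0 l) hM0)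
    rcases hyprop l with hzero | ⟨T, hT, hT0, b, hb, hbT⟩
    · rw [hzero]
      simp only [dotProduct_zero, abs_zero]
      exact mul_nonneg (hc0 k) (mul_nonneg (hd0 l) hM0)
    have hb0 : 0 ≤ b * Real.sqrt T.card := by
      have := (abs_nonneg _).trans (hb hT.choose); positivity
    have ha0 : 0 ≤ a * Real.sqrt S.card := by
      have := (abs_nonneg _).trans (ha hS.choose); positivity
    calc |A.mulVec (xs k) ⬝ᵥ (ys l)|
        ≤ (a * Real.sqrt S.card) * ((b * Real.sqrt T.card) * M) :=
          core A M hM (xs k) (ys l) S T hS hT a b hS0 ha hT0 hb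
      _ ≤ c k * (d l * M) := by
          refine mul_le_mul haS (mul_le_mul_of_nonneg_right hbT hM0) ?_ (hc0 k)
          positivity
  calc |A.mulVec x ⬝ᵥ y|
      ≤ ∑ k ∈ Finset.range (K+1), ∑ l ∈ Finset.range (K+1), |A.mulVec (xs k) ⬝ᵥ (ys l)| := by
        rw [hx1]
        refine (Finset.abs_sum_le_sum_abs _ _).trans (Finset.sum_le_sum fun k _ => ?_)
        rw [hx2 k]
        exact Finset.abs_sum_le_sum_abs _ _
    _ ≤ ∑ k ∈ Finset.range (K+1), ∑ l ∈ Finset.range (K+1), c k * (d l * M) :=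
        Finset.sum_le_sum fun k _ => Finset.sum_le_sum fun l _ => hblock k l
    _ = (∑ k ∈ Finset.range (K+1), c k) * ((∑ l ∈ Finset.range (K+1), d l) * M) := by
        rw [Finset.sum_mul]
        exact Finset.sum_congr rfl fun k _ => by
          rw [← Finset.mul_sum, Finset.sum_mul]
    _ ≤ (2 * Real.sqrt K + 1/2) * ((2 * Real.sqrt K + 1/2) * M) := by
        have hs0 : (0:ℝ) ≤ 2 * Real.sqrt K + 1/2 := by positivity
        refine mul_le_mul hcsum (mul_le_mul_of_nonneg_right hdsum hM0) ?_ hs0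
        exact mul_nonneg (Finset.sum_nonneg fun l _ => hd0 l) hM0
    _ = (2 * Real.sqrt K + 1/2)^2 * M := by ring

lemma reg_abs_le_one {p : ℕ} {x : Fin p → ℝ} (hx : x ∈ RegVectors p) (i : Fin p) :
    |x i| ≤ 1 := by
  obtain ⟨hsum, s, hs1, hsp, hcoord⟩ := hx
  have hs : (1:ℝ) ≤ (s:ℝ) := by exact_mod_cast hs1
  have h1 : x i ^ 2 ≤ 1 := by
    rcases hcoord i with h | h
    · rw [h]; norm_num
    · rw [h, div_le_one (by linarith)]
      exact hs
  calc |x i| = Real.sqrt (x i ^ 2) := (Real.sqrt_sq_eq_abs _).symm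
    _ ≤ Real.sqrt 1 := Real.sqrt_le_sqrt h1
    _ = 1 := Real.sqrt_one

lemma reg_dot_bound {p : ℕ} (A : Matrix (Fin p) (Fin p) ℝ) {x y : Fin p → ℝ}
    (hx : x ∈ RegVectors p) (hy : y ∈ RegVectors p) :
    |A.mulVec x ⬝ᵥ y| ≤ ∑ i, ∑ j, |A j i| := by
  rw [dot_rep]
  calc |∑ i, x i * (∑ j, A j i * y j)| ≤ ∑ i, |x i * (∑ j, A j i * y j)| :=
        Finset.abs_sum_le_sum_abs _ _
    _ ≤ ∑ i, ∑ j, |A j i| := by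
      refine Finset.sum_le_sum fun i _ => ?_
      rw [abs_mul]
      calc |x i| * |∑ j, A j i * y j| ≤ 1 * |∑ j, A j i * y j| :=
            mul_le_mul_of_nonneg_right (reg_abs_le_one hx i) (abs_nonneg _)
        _ = |∑ j, A j i * y j| := one_mul _
        _ ≤ ∑ j, |A j i * y j| := Finset.abs_sum_le_sum_abs _ _
        _ ≤ ∑ j, |A j i| := by
            refine Finset.sum_le_sum fun j _ => ?_
            rw [abs_mul]
            calc |A j i| * |y j| ≤ |A j i| * 1 :=
                  mul_le_mul_of_nonneg_left (reg_abs_le_one hy j) (abs_nonneg _)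
              _ = |A j i| := mul_one _

lemma e0_mem_reg {p : ℕ} (hp : 0 < p) :
    (fun i : Fin p => if i = ⟨0, hp⟩ then (1:ℝ) else 0) ∈ RegVectors p := by
  refine ⟨?_, 1, le_rfl, hp, fun i => ?_⟩
  · rw [Finset.sum_congr rfl (fun i _ => show (if i = ⟨0,hp⟩ then (1:ℝ) else 0)^2
      = if i = ⟨0,hp⟩ then (1:ℝ) else 0 by split <;> norm_num)]
    simp
  · dsimp only
    split <;> norm_num

end Aux

/-- Spectral norm bound via regular vectors:
`‖A‖ ≤ 12 ⌈ln(2p)⌉² max_{x,y ∈ Reg_p} |(Ax, y)|`. -/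
theorem spectral_norm_regular_vectors_bound
    {p : ℕ} (hp : 0 < p) (A : Matrix (Fin p) (Fin p) ℝ) :
    specNorm A ≤ 12 * (⌈Real.log (2 * p)⌉ : ℝ) ^ 2 *
      sSup {r : ℝ | ∃ x ∈ RegVectors p, ∃ y ∈ RegVectors p, r = |A.mulVec x ⬝ᵥ y|} := by
  classical
  set Sset := {r : ℝ | ∃ x ∈ RegVectors p, ∃ y ∈ RegVectors p, r = |A.mulVec x ⬝ᵥ y|} with hSset
  set M := sSup Sset with hMdef
  have hbdd : BddAbove Sset := by
    refine ⟨∑ i, ∑ j, |A j i|, fun r hr => ?_⟩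
    obtain ⟨x, hx, y, hy, rfl⟩ := hr
    exact reg_dot_bound A hx hy
  have hM : ∀ u ∈ RegVectors p, ∀ w ∈ RegVectors p, |A.mulVec u ⬝ᵥ w| ≤ M := by
    intro u hu w hw
    exact le_csSup hbdd ⟨u, hu, w, hw, rfl⟩
  have hM0 : 0 ≤ M := le_trans (abs_nonneg _) (hM _ (e0_mem_reg hp) _ (e0_mem_reg hp))
  have h2p1 : (1:ℝ) < 2 * p := by
    have : (1:ℝ) ≤ p := by exact_mod_cast hp
    linarith
  have hlogpos : 0 < Real.log (2*(p:ℝ)) := Real.log_pos h2p1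
  have hceilpos : 0 < ⌈Real.log (2*(p:ℝ))⌉ := Int.ceil_pos.mpr hlogpos
  set L : ℕ := (⌈Real.log (2*(p:ℝ))⌉).toNat with hLdef
  have hLcast : ((L:ℝ)) = ((⌈Real.log (2*(p:ℝ))⌉ : ℤ) : ℝ) := by
    rw [hLdef]
    exact_mod_cast Int.toNat_of_nonneg hceilpos.le
  have hL1 : 1 ≤ L := by omega
  have hLR1 : (1:ℝ) ≤ L := by exact_mod_cast hL1
  set K : ℕ := 3 * L^2 - L with hKdef
  have hLle : L ≤ 3 * L^2 := by nlinarith [hL1]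
  have hKcast : (K:ℝ) = 3*(L:ℝ)^2 - L := by
    rw [hKdef, Nat.cast_sub hLle]
    push_cast
    ring
  have hlogle : Real.log (2*(p:ℝ)) ≤ (L:ℝ) := by rw [hLcast]; exact Int.le_ceil _
  have hln2l : 0.6931471803 < Real.log 2 := Real.log_two_gt_d9
  have hln2u : Real.log 2 < 0.6931471808 := Real.log_two_lt_d9
  have hpK : (4:ℝ) * p ≤ 4 ^ K := by
    have hp0 : (0:ℝ) < 4 * p := by positivity
    have hlog4 : Real.log (4*(p:ℝ)) = Real.log 2 + Real.log (2*(p:ℝ)) := by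
      rw [show (4:ℝ)*p = 2*(2*p) by ring, Real.log_mul (by norm_num) (by positivity)]
    have hKge : 2*(L:ℝ) ≤ (K:ℝ) := by rw [hKcast]; nlinarith [hLR1]
    have hexpineq : Real.log (4*(p:ℝ)) ≤ (K:ℝ) * Real.log 4 := by
      have hlog44 : Real.log 4 = 2 * Real.log 2 := by
        rw [show (4:ℝ) = 2^2 by norm_num, Real.log_pow]
        push_cast; ring
      have hl2pos : (0:ℝ) ≤ Real.log 2 := by linarith
      rw [hlog4, hlog44]
      nlinarith [hLR1, hKge, hlogle, hln2l, hlogpos,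
        mul_le_mul_of_nonneg_right hKge hl2pos,
        mul_nonneg (sub_nonneg.mpr hLR1) (show (0:ℝ) ≤ Real.log 2 - 0.6931471803 by linarith)]
    calc (4:ℝ)*p = Real.exp (Real.log (4*(p:ℝ))) := (Real.exp_log hp0).symm
      _ ≤ Real.exp ((K:ℝ) * Real.log 4) := Real.exp_le_exp.mpr hexpineq
      _ = (4:ℝ)^K := by rw [Real.exp_nat_mul, Real.exp_log (by norm_num : (0:ℝ) < 4)]
  have hnum : (2 * Real.sqrt K + 1/2)^2 ≤ 12 * (L:ℝ)^2 := by
    have hsK0 : 0 ≤ Real.sqrt K := Real.sqrt_nonneg _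
    have hsK2 : Real.sqrt K ^ 2 = (K:ℝ) := Real.sq_sqrt (Nat.cast_nonneg K)
    nlinarith [hsK2, hKcast, hLR1, hsK0, sq_nonneg (Real.sqrt K - (2*(L:ℝ) - 1/8))]
  have hgoalrw : 12 * ((⌈Real.log (2 * (p:ℝ))⌉ : ℤ) : ℝ) ^ 2 * M = 12 * (L:ℝ)^2 * M := by
    rw [← hLcast]
  rw [hgoalrw]
  show ‖LinearMap.toContinuousLinearMap (Matrix.toEuclideanLin A)‖ ≤ 12 * (L:ℝ)^2 * M
  refine ContinuousLinearMap.opNorm_le_bound _ (mul_nonneg (by positivity) hM0) fun v => ?_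
  set T := LinearMap.toContinuousLinearMap (Matrix.toEuclideanLin A) with hT
  rcases eq_or_ne v 0 with rfl | hv0
  · simp
  have hvn : (0:ℝ) < ‖v‖ := norm_pos_iff.mpr hv0
  have hv2 : ∑ i, (v i : ℝ)^2 = ‖v‖^2 := by
    rw [EuclideanSpace.norm_eq, Real.sq_sqrt (by positivity)]
    exact Finset.sum_congr rfl fun i _ => by rw [Real.norm_eq_abs, sq_abs]
  rcases eq_or_ne (T v) 0 with hTv0 | hTv0
  · rw [hTv0, norm_zero]
    exact mul_nonneg (mul_nonneg (by positivity) hM0) (norm_nonneg v)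
  have hwn : (0:ℝ) < ‖T v‖ := norm_pos_iff.mpr hTv0
  have hw2 : ∑ j, ((T v) j : ℝ)^2 = ‖T v‖^2 := by
    rw [EuclideanSpace.norm_eq, Real.sq_sqrt (by positivity)]
    exact Finset.sum_congr rfl fun i _ => by rw [Real.norm_eq_abs, sq_abs]
  have hTvj : ∀ j, (T v) j = A.mulVec (fun i => v i) j := fun j => rfl
  set x : Fin p → ℝ := fun i => v i / ‖v‖ with hxdef
  set y : Fin p → ℝ := fun j => (T v) j / ‖T v‖ with hydef
  have hx : ∑ i, x i ^2 = 1 := by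
    simp only [hxdef, div_pow]
    rw [← Finset.sum_div, hv2, div_self (by positivity)]
  have hy : ∑ j, y j ^2 = 1 := by
    simp only [hydef, div_pow]
    rw [← Finset.sum_div, hw2, div_self (by positivity)]
  have hBav : A.mulVec x ⬝ᵥ y = ‖T v‖ / ‖v‖ := by
    have hmx : ∀ j, A.mulVec x j = (A.mulVec (fun i => v i) j) / ‖v‖ := by
      intro j
      simp only [mulVec, dotProduct, hxdef]
      rw [Finset.sum_div]
      exact Finset.sum_congr rfl fun i _ => by ring
    calc A.mulVec x ⬝ᵥ y = ∑ j, A.mulVec x j * y j := rfl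
      _ = ∑ j, ((T v) j)^2 / (‖v‖ * ‖T v‖) := by
          refine Finset.sum_congr rfl fun j _ => ?_
          rw [hmx j, ← hTvj j, hydef]
          ring
      _ = (∑ j, ((T v) j)^2) / (‖v‖ * ‖T v‖) := by rw [Finset.sum_div]
      _ = ‖T v‖^2 / (‖v‖ * ‖T v‖) := by rw [hw2]
      _ = ‖T v‖ / ‖v‖ := by field_simp
  have hub := unit_bound A M hM0 hM hpK x y hx hy
  rw [hBav, abs_of_nonneg (by positivity)] at hub
  have hdiv : ‖T v‖ / ‖v‖ ≤ 12*(L:ℝ)^2*M :=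
    le_trans hub (mul_le_mul_of_nonneg_right hnum hM0)
  rw [div_le_iff₀ hvn] at hdiv
  exact hdiv
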